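/- arXiv:1510.00909 — 2 statements merged into one kernel-verified Lean document; each statement's English description precedes it below -/
import Mathlib

section
/- For every m ≥ 2 and every q₁,...,q_m ∈ [1,2] with 1/q₁ + ⋯ + 1/q_m = (m+1)/2, any constant C such that the mixed-norm inequality (Σ_{j₁}(Σ_{j₂}(⋯(Σ_{j_m}|T(e_{j₁},...,e_{j_m})|^{q_m})^{q_{m-1}/q_m}⋯)^{q₂/q₃})^{q₁/q₂})^{1/q₁} ≤ C‖T‖ holds for all real m-linear forms T on (ℓ∞ⁿ)^m and all n, must satisfy C ≥ 2^{((m-1)q̂₁ + Σ_{i=2}^m q̂ᵢ - (m-1)q₁⋯q_m)/(q₁⋯q_m)}, where q̂ᵢ = (q₁⋯q_m)/qᵢ. -/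
/-- The iterated mixed `ℓ_{q₁}(ℓ_{q₂}(⋯ℓ_{q_m}))` norm of an `m`-indexed array
`f` with indices ranging over `{0, ..., N-1}`:
`(Σ_{j₁<N}(⋯(Σ_{j_m<N}|f(j₁,...,j_m)|^{q_m})^{q_{m-1}/q_m}⋯)^{q₁/q₂})^{1/q₁}`. -/
noncomputable def mixedNorm : (m : ℕ) → (N : ℕ) → (ℕ → ℝ) → ((ℕ → ℕ) → ℝ) → ℝ
  | 0, _, _, f => |f fun _ => 0|
  | m + 1, N, q, f =>
      (∑ j : Fin N, (mixedNorm m N (fun i => q (i + 1))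
          (fun idx => f (fun i => if i = 0 then (j : ℕ) else idx (i - 1)))) ^ q 0)
        ^ (1 / q 0)

/-- The `j`-th canonical basis vector of `ℝⁿ` (interpreted as `0` if `j ≥ n`). -/
def eVec (n : ℕ) (j : ℕ) : Fin n → ℝ := fun i => if (i : ℕ) = j then 1 else 0

/-- The supremum norm of an `m`-linear form on `(ℓ∞ⁿ)^m`. -/
noncomputable def supNorm (m n : ℕ)
    (T : MultilinearMap ℝ (fun _ : Fin m => (Fin n → ℝ)) ℝ) : ℝ :=
  sSup {v : ℝ | ∃ x : Fin m → Fin n → ℝ, (∀ i, ‖x i‖ ≤ 1) ∧ v = |T x|}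

/-- The shift exponents in the inductive definition of `T_m`. -/
def Tshift (m k : ℕ) : ℕ := if k ≤ 1 then 2 ^ (m - 1) else 2 ^ (m - k)

/-- The inductively defined `m`-linear forms `T_m` of Diniz et al.:
`T₂(x,y) = x₁y₁ + x₁y₂ + x₂y₁ - x₂y₂` and
`T_{m+1}(x⁽¹⁾,...,x⁽ᵐ⁺¹⁾) = (x₁⁽ᵐ⁺¹⁾+x₂⁽ᵐ⁺¹⁾)T_m(x⁽¹⁾,...,x⁽ᵐ⁾)
  + (x₁⁽ᵐ⁺¹⁾-x₂⁽ᵐ⁺¹⁾)T_m(B^{2^{m-1}}x⁽¹⁾, B^{2^{m-1}}x⁽²⁾, B^{2^{m-2}}x⁽³⁾, ..., B²x⁽ᵐ⁾)`,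
where `B` is the backward shift. The `k`-th argument (0-indexed) is `x k : ℕ → ℝ`. -/
noncomputable def Tform : ℕ → (ℕ → ℕ → ℝ) → ℝ
  | 0, _ => 0
  | 1, x => x 0 0
  | 2, x => x 0 0 * x 1 0 + x 0 0 * x 1 1 + x 0 1 * x 1 0 - x 0 1 * x 1 1
  | m + 3, x =>
      (x (m + 2) 0 + x (m + 2) 1) * Tform (m + 2) x
        + (x (m + 2) 0 - x (m + 2) 1)
            * Tform (m + 2) (fun k j => x k (j + Tshift (m + 2) k))

/-!
The lower bound is witnessed by `T_m` on `ℓ∞ⁿ` with `n = 2^{m-1}`. Since `|a + b| + |a - b| ≤ 2`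
for `|a|, |b| ≤ 1`, the recursion defining `T_m` gives `‖T_m‖ ≤ 2^{m-1}`. The coefficients
`T_m(e_{j₁}, …, e_{j_m})` are `±1` when `j₁ < 2^{m-1}` and `⌊j_k / 2⌋ = ⌊j₁ / 2^{k-1}⌋` for
`2 ≤ k ≤ m`, and `0` otherwise: the second term of the recursion is the first one translated by
`2^{m-2}` in `j₁`, so the two terms have disjoint supports. Hence, for fixed `j₁`, the remaining
coefficients form the indicator of a product of pairs, the mixed norm equals
`2^{(m-1)/q₁ + 1/q₂ + ⋯ + 1/q_m}`, and dividing by `‖T_m‖` gives the bound.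
-/

theorem Tshift_zero (m : ℕ) : Tshift m 0 = 2 ^ (m - 1) := rfl

theorem Tshift_of_pos {m k : ℕ} (hk : 1 ≤ k) : Tshift m k = 2 ^ (m - k) := by
  unfold Tshift
  split_ifs with h
  · rw [show k = 1 by omega]
  · rfl

theorem Tshift_le (m k : ℕ) : Tshift m k ≤ 2 ^ (m - 1) := by
  unfold Tshift
  split_ifs
  · exact le_rfl
  · exact Nat.pow_le_pow_right two_pos (by omega)

theorem Tform_one (x : ℕ → ℕ → ℝ) : Tform 1 x = x 0 0 := rfl

/-- For `m = 1` this is the defining formula of `T₂`, since `Tshift 1 0 = 1`. -/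
theorem Tform_succ {m : ℕ} (hm : 1 ≤ m) (x : ℕ → ℕ → ℝ) :
    Tform (m + 1) x = (x m 0 + x m 1) * Tform m x
      + (x m 0 - x m 1) * Tform m (fun k j => x k (j + Tshift m k)) := by
  match m, hm with
  | 1, _ => simp only [Tform, Tshift]; norm_num; ring
  | m + 2, _ => rfl

theorem Tform_congr {m : ℕ} {x y : ℕ → ℕ → ℝ}
    (h : ∀ k < m, ∀ j < 2 ^ (m - 1), x k j = y k j) : Tform m x = Tform m y := by
  rcases Nat.eq_zero_or_pos m with rfl | hm
  · rfl
  induction m, hm using Nat.le_induction generalizing x y with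
  | base => exact h 0 one_pos 0 one_pos
  | succ m hm ih =>
    have hpow : 2 ^ (m + 1 - 1) = 2 ^ (m - 1) + 2 ^ (m - 1) := by
      rw [← two_mul, ← pow_succ']; congr 1; omega
    rw [Tform_succ hm, Tform_succ hm, h m (by omega) 0 (by positivity),
      h m (by omega) 1 (by have := Nat.one_le_two_pow (n := m - 1); omega),
      ih fun k hk j hj => h k (by omega) j (by omega),
      ih fun k hk j hj => h k (by omega) _ (by have := Tshift_le m k; omega)]

theorem Tform_update_isLinearMap {m k : ℕ} (hk : k < m) (x : ℕ → ℕ → ℝ) :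
    IsLinearMap ℝ fun v => Tform m (Function.update x k v) := by
  have hm : 1 ≤ m := by omega
  induction m, hm using Nat.le_induction generalizing x k with
  | base =>
    obtain rfl : k = 0 := by omega
    exact ⟨fun a b => rfl, fun c a => rfl⟩
  | succ m hm ih =>
    simp only [Tform_succ hm]
    obtain hk | hk : k < m ∨ k = m := by omega
    · have hshift : ∀ v, (fun k' j => Function.update x k v k' (j + Tshift m k'))
          = Function.update (fun k' j => x k' (j + Tshift m k')) k
              (LinearMap.funLeft ℝ ℝ (· + Tshift m k) v) := by
        intro v; ext k' j; by_cases hk' : k' = k <;> simp [hk', Function.update_of_ne]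
      simp only [hshift, Function.update_of_ne (Nat.ne_of_gt hk)]
      let L₁ := (ih hk x).mk'
      let L₂ := (ih hk fun k' j => x k' (j + Tshift m k')).mk'
      exact ((x m 0 + x m 1) • L₁
        + (x m 0 - x m 1) • L₂ ∘ₗ LinearMap.funLeft ℝ ℝ (· + Tshift m k)).isLinear
    · subst k
      have hfix : ∀ (y : ℕ → ℕ → ℝ) v, Tform m (Function.update y m v) = Tform m y :=
        fun y v => Tform_congr fun k' hk' j _ => by rw [Function.update_of_ne (by omega)]
      have hfix' : ∀ v, Tform m (fun k' j => Function.update x m v k' (j + Tshift m k'))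
          = Tform m (fun k' j => x k' (j + Tshift m k')) :=
        fun v => Tform_congr fun k' hk' j _ => by rw [Function.update_of_ne (by omega)]
      simp only [hfix, hfix', Function.update_self]
      constructor <;> intros <;> simp only [Pi.add_apply, Pi.smul_apply, smul_eq_mul] <;> ring

theorem Tform_eq_zero_of_row_eq_zero {m k : ℕ} (hk : k < m) {x : ℕ → ℕ → ℝ} (hx : x k = 0) :
    Tform m x = 0 := by
  simpa [← hx] using (Tform_update_isLinearMap hk x).map_zero

theorem abs_add_add_abs_sub_le_two {a b : ℝ} (ha : |a| ≤ 1) (hb : |b| ≤ 1) :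
    |a + b| + |a - b| ≤ 2 := by
  rw [abs_le] at ha hb
  rcases abs_cases (a + b) with ⟨h₁, _⟩ | ⟨h₁, _⟩ <;>
    rcases abs_cases (a - b) with ⟨h₂, _⟩ | ⟨h₂, _⟩ <;> linarith

theorem abs_Tform_le {m : ℕ} {x : ℕ → ℕ → ℝ} (hx : ∀ k < m, ∀ j, |x k j| ≤ 1) :
    |Tform m x| ≤ 2 ^ (m - 1) := by
  rcases Nat.eq_zero_or_pos m with rfl | hm
  · simp [Tform]
  induction m, hm using Nat.le_induction generalizing x with
  | base => simpa [Tform_one] using hx 0 one_pos 0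
  | succ m hm ih =>
    have hA := ih fun k hk => hx k (by omega)
    have hB := ih (x := fun k j => x k (j + Tshift m k)) fun k hk j => hx k (by omega) _
    have hsum := abs_add_add_abs_sub_le_two (hx m (by omega) 0) (hx m (by omega) 1)
    rw [Tform_succ hm, show m + 1 - 1 = (m - 1) + 1 by omega, pow_succ]
    calc _ ≤ |x m 0 + x m 1| * 2 ^ (m - 1) + |x m 0 - x m 1| * 2 ^ (m - 1) := by
          refine (abs_add_le _ _).trans ?_
          rw [abs_mul, abs_mul]
          gcongr
      _ ≤ 2 ^ (m - 1) * 2 := by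
          rw [← add_mul, mul_comm]; exact mul_le_mul_of_nonneg_left hsum (by positivity)

theorem div_two_eq_div_two_pow_iff {M k a x : ℕ} (hkM : k ≤ M) (ha : 2 ^ M ≤ a) :
    x / 2 = a / 2 ^ k ↔
      2 ^ (M + 1 - k) ≤ x ∧ (x - 2 ^ (M + 1 - k)) / 2 = (a - 2 ^ M) / 2 ^ k := by
  obtain ⟨t, ht⟩ : ∃ t, t = 2 ^ (M - k) := ⟨_, rfl⟩
  have h₁ : 2 ^ (M + 1 - k) = 2 * t := by rw [ht, ← pow_succ']; congr 1; omega
  have h₂ : 2 ^ M = 2 ^ k * t := by rw [ht, ← pow_add]; congr 1; omega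
  have h₃ : a / 2 ^ k = t + (a - 2 ^ M) / 2 ^ k := by
    conv_lhs => rw [show a = 2 ^ k * t + (a - 2 ^ M) by omega]
    rw [Nat.mul_add_div (by positivity)]
  rw [h₃, h₁]
  generalize (a - 2 ^ M) / 2 ^ k = r
  omega

def basisArray (idx : ℕ → ℕ) : ℕ → ℕ → ℝ := fun k j => if j = idx k then 1 else 0

def TformSupport (m : ℕ) (idx : ℕ → ℕ) : Prop :=
  idx 0 < 2 ^ (m - 1) ∧ ∀ k, 1 ≤ k → k < m → idx k / 2 = idx 0 / 2 ^ k

instance (m : ℕ) : DecidablePred (TformSupport m) := fun idx => by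
  unfold TformSupport; infer_instance

theorem TformSupport_succ_iff {m : ℕ} (hm : 1 ≤ m) (idx : ℕ → ℕ) :
    TformSupport (m + 1) idx ↔ idx m < 2 ∧ (TformSupport m idx ∨
      (∀ k < m, Tshift m k ≤ idx k) ∧ TformSupport m fun k => idx k - Tshift m k) := by
  have hpow : 2 ^ m = 2 ^ (m - 1) + 2 ^ (m - 1) := by
    rw [← two_mul, ← pow_succ']; congr 1; omega
  have hlast (h : idx 0 < 2 ^ m) : idx m / 2 = idx 0 / 2 ^ m ↔ idx m < 2 := by
    rw [Nat.div_eq_of_lt h]; omega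
  unfold TformSupport
  simp only [Tshift_zero, Nat.add_sub_cancel]
  by_cases h0 : idx 0 < 2 ^ (m - 1)
  · constructor
    · rintro ⟨hlt, h⟩
      exact ⟨(hlast hlt).1 (h m hm m.lt_succ_self),
        .inl ⟨h0, fun k hk hkm => h k hk (by omega)⟩⟩
    · rintro ⟨hm2, (⟨-, h⟩ | ⟨h, -⟩)⟩
      · refine ⟨by omega, fun k hk hkm => ?_⟩
        obtain hkm | hkm : k < m ∨ k = m := by omega
        exacts [h k hk hkm, hkm ▸ (hlast (by omega)).2 hm2]
      · have := h 0 (by omega); rw [Tshift_zero] at this; omega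
  · push Not at h0
    have hshift : ∀ k, 1 ≤ k → k < m → (idx k / 2 = idx 0 / 2 ^ k ↔
        Tshift m k ≤ idx k ∧ (idx k - Tshift m k) / 2 = (idx 0 - 2 ^ (m - 1)) / 2 ^ k) := by
      intro k hk hkm
      rw [Tshift_of_pos hk, show m - k = m - 1 + 1 - k by omega]
      exact div_two_eq_div_two_pow_iff (by omega) h0
    constructor
    · rintro ⟨hlt, h⟩
      refine ⟨(hlast hlt).1 (h m hm m.lt_succ_self), .inr ⟨fun k hkm => ?_, by omega,
        fun k hk hkm => ((hshift k hk hkm).1 (h k hk (by omega))).2⟩⟩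
      rcases Nat.eq_zero_or_pos k with rfl | hk
      exacts [h0, ((hshift k hk hkm).1 (h k hk (by omega))).1]
    · rintro ⟨hm2, (⟨h, -⟩ | ⟨hle, hlt, h⟩)⟩
      · omega
      · refine ⟨by omega, fun k hk hkm => ?_⟩
        obtain hkm | hkm : k < m ∨ k = m := by omega
        exacts [(hshift k hk hkm).2 ⟨hle k hkm, h k hk hkm⟩,
          hkm ▸ (hlast (by omega)).2 hm2]

theorem Tform_shift_basisArray (m : ℕ) (idx s : ℕ → ℕ) :
    Tform m (fun k j => basisArray idx k (j + s k))
      = if ∀ k < m, s k ≤ idx k then Tform m (basisArray fun k => idx k - s k) else 0 := by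
  split_ifs with h
  · refine Tform_congr fun k hk j _ => ?_
    have := h k hk
    simp only [basisArray, show j + s k = idx k ↔ j = idx k - s k by omega]
  · push Not at h
    obtain ⟨k, hk, hlt⟩ := h
    refine Tform_eq_zero_of_row_eq_zero hk (funext fun j => ?_)
    simp only [basisArray, Pi.zero_apply, ite_eq_right_iff]
    omega

theorem abs_Tform_basisArray {m : ℕ} (hm : 1 ≤ m) (idx : ℕ → ℕ) :
    |Tform m (basisArray idx)| = if TformSupport m idx then 1 else 0 := by
  induction m, hm using Nat.le_induction generalizing idx with
  | base =>
    have hsupp : TformSupport 1 idx ↔ 0 = idx 0 :=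
      ⟨fun h => by simpa [eq_comm] using h.1, fun h => ⟨by simp [← h], by omega⟩⟩
    simp only [Tform_one, basisArray, hsupp]
    split_ifs <;> simp
  | succ m hm ih =>
    rw [Tform_succ hm, Tform_shift_basisArray]
    simp only [TformSupport_succ_iff hm]
    have hA := ih idx
    have hB : |if ∀ k < m, Tshift m k ≤ idx k
          then Tform m (basisArray fun k => idx k - Tshift m k) else 0|
        = if (∀ k < m, Tshift m k ≤ idx k) ∧ TformSupport m (fun k => idx k - Tshift m k)
          then 1 else 0 := by
      split_ifs <;> simp_all
    -- at most one of the two summands is nonzero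
    have hdisj : ¬(TformSupport m idx ∧ ∀ k < m, Tshift m k ≤ idx k) :=
      fun ⟨⟨h0, _⟩, hle⟩ => by have := hle 0 hm; rw [Tshift_zero] at this; omega
    generalize Tform m (basisArray idx) = A at hA
    generalize (if ∀ k < m, Tshift m k ≤ idx k then _ else _) = B at hB
    simp only [basisArray]
    obtain h | h : idx m < 2 ∨ 2 ≤ idx m := by omega
    · obtain h | h : idx m = 0 ∨ idx m = 1 := by omega
      all_goals
        by_cases hP : TformSupport m idx <;>
        by_cases hQ : (∀ k < m, Tshift m k ≤ idx k) ∧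
          TformSupport m (fun k => idx k - Tshift m k) <;>
        simp_all
    · simp [show 0 ≠ idx m by omega, show 1 ≠ idx m by omega, show ¬idx m < 2 by omega]

def padFin {m : ℕ} (y : Fin m → ℕ → ℝ) : ℕ → ℕ → ℝ :=
  fun k => if hk : k < m then y ⟨k, hk⟩ else 0

theorem padFin_update {m : ℕ} [DecidableEq (Fin m)] (y : Fin m → ℕ → ℝ) (i : Fin m)
    (v : ℕ → ℝ) :
    padFin (Function.update y i v) = Function.update (padFin y) i v := by
  ext k : 1
  by_cases hk : k < m
  · obtain rfl | hne := eq_or_ne (⟨k, hk⟩ : Fin m) i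
    · simp [padFin, hk]
    · rw [Function.update_of_ne (Fin.val_ne_of_ne hne)]
      simp [padFin, hk, hne]
  · simp [padFin, hk, Function.update_of_ne (show k ≠ i by omega)]

noncomputable def TformMultilinear (m : ℕ) : MultilinearMap ℝ (fun _ : Fin m => ℕ → ℝ) ℝ where
  toFun y := Tform m (padFin y)
  map_update_add' y i a b := by
    simpa only [padFin_update] using (Tform_update_isLinearMap i.isLt (padFin y)).map_add a b
  map_update_smul' y i c a := by
    simpa only [padFin_update] using (Tform_update_isLinearMap i.isLt (padFin y)).map_smul c a

def zeroExtend (n : ℕ) : (Fin n → ℝ) →ₗ[ℝ] ℕ → ℝ :=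
  LinearMap.pi fun j => if hj : j < n then LinearMap.proj ⟨j, hj⟩ else 0

theorem zeroExtend_apply (n : ℕ) (v : Fin n → ℝ) (j : ℕ) :
    zeroExtend n v j = if hj : j < n then v ⟨j, hj⟩ else 0 := by
  unfold zeroExtend
  split_ifs <;> simp [*]

noncomputable def Tmap (m n : ℕ) : MultilinearMap ℝ (fun _ : Fin m => Fin n → ℝ) ℝ :=
  (TformMultilinear m).compLinearMap fun _ => zeroExtend n

theorem Tmap_apply (m n : ℕ) (x : Fin m → Fin n → ℝ) :
    Tmap m n x = Tform m (padFin fun k => zeroExtend n (x k)) := rfl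

theorem abs_Tmap_eVec (m : ℕ) (idx : ℕ → ℕ) :
    |Tmap (m + 1) (2 ^ m) (fun k => eVec (2 ^ m) (idx k))|
      = if TformSupport (m + 1) idx then 1 else 0 := by
  rw [Tmap_apply, ← abs_Tform_basisArray m.succ_pos]
  congr 1
  refine Tform_congr fun k hk j hj => ?_
  simp only [Nat.add_sub_cancel] at hj
  simp [padFin, zeroExtend_apply, eVec, basisArray, hk, hj]

theorem supNorm_nonneg (m n : ℕ) (T : MultilinearMap ℝ (fun _ : Fin m => Fin n → ℝ) ℝ) :
    0 ≤ supNorm m n T :=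
  Real.sSup_nonneg <| by rintro _ ⟨x, -, rfl⟩; exact abs_nonneg _

theorem supNorm_le {m n : ℕ} {T : MultilinearMap ℝ (fun _ : Fin m => Fin n → ℝ) ℝ} {B : ℝ}
    (hB : 0 ≤ B) (hT : ∀ x : Fin m → Fin n → ℝ, (∀ i, ‖x i‖ ≤ 1) → |T x| ≤ B) :
    supNorm m n T ≤ B :=
  Real.sSup_le (by rintro _ ⟨x, hx, rfl⟩; exact hT x hx) hB

theorem supNorm_Tmap_le (m n : ℕ) : supNorm m n (Tmap m n) ≤ 2 ^ (m - 1) := by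
  refine supNorm_le (by positivity) fun x hx => ?_
  rw [Tmap_apply]
  refine abs_Tform_le fun k hk j => ?_
  simp only [padFin, hk, dif_pos, zeroExtend_apply]
  split_ifs with hj
  · exact (norm_le_pi_norm (x ⟨k, hk⟩) ⟨j, hj⟩).trans (hx _)
  · simp

theorem mixedNorm_eq_zero {m N : ℕ} {q : ℕ → ℝ} {f : (ℕ → ℕ) → ℝ} (hq : ∀ i < m, q i ≠ 0)
    (hf : ∀ idx, f idx = 0) : mixedNorm m N q f = 0 := by
  induction m generalizing q f with
  | zero => simp [mixedNorm, hf]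
  | succ m ih =>
    rw [mixedNorm, Finset.sum_eq_zero fun j _ => ?_,
      Real.zero_rpow (one_div_ne_zero (hq 0 m.succ_pos))]
    rw [ih (fun i hi => hq (i + 1) (by omega)) fun idx => hf _, Real.zero_rpow (hq 0 m.succ_pos)]

theorem mixedNorm_succ_of_rows {m N : ℕ} {q : ℕ → ℝ} {f : (ℕ → ℕ) → ℝ} {S : Finset ℕ} {X : ℝ}
    (hq : q 0 ≠ 0) (hX : 0 ≤ X) (hS : ∀ j ∈ S, j < N)
    (hrow : ∀ j : Fin N, mixedNorm m N (fun i => q (i + 1))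
      (fun idx => f fun i => if i = 0 then j else idx (i - 1)) = if (j : ℕ) ∈ S then X else 0) :
    mixedNorm (m + 1) N q f = (S.card : ℝ) ^ (1 / q 0) * X := by
  have hsum : ∑ j ∈ Finset.range N, (if j ∈ S then X else 0) ^ q 0 = S.card * X ^ q 0 := by
    simp_rw [ite_pow, Real.zero_rpow hq, Finset.sum_ite_mem,
      Finset.inter_eq_right.2 fun j hj => Finset.mem_range.2 (hS j hj), Finset.sum_const,
      nsmul_eq_mul]
  rw [mixedNorm, Finset.sum_congr rfl fun j _ => by rw [hrow j],
    Fin.sum_univ_eq_sum_range (fun j => (if j ∈ S then X else 0) ^ q 0), hsum,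
    Real.mul_rpow (by positivity) (by positivity), ← Real.rpow_mul hX, mul_one_div_cancel hq,
    Real.rpow_one]

theorem mixedNorm_indicator_pi {m N : ℕ} {q : ℕ → ℝ} {f : (ℕ → ℕ) → ℝ} {S : ℕ → Finset ℕ}
    (hq : ∀ i < m, q i ≠ 0) (hS : ∀ k < m, ∀ j ∈ S k, j < N)
    (hf : ∀ idx, |f idx| = if ∀ k < m, idx k ∈ S k then 1 else 0) :
    mixedNorm m N q f = ∏ k ∈ Finset.range m, ((S k).card : ℝ) ^ (1 / q k) := by
  induction m generalizing q f S with
  | zero => simp [mixedNorm, hf]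
  | succ m ih =>
    rw [Finset.prod_range_succ', mul_comm]
    refine mixedNorm_succ_of_rows (hq 0 m.succ_pos) (by positivity) (hS 0 m.succ_pos)
      fun j => ?_
    split_ifs with hj
    · refine ih (fun i hi => hq (i + 1) (by omega)) (fun k hk => hS (k + 1) (by omega))
        fun idx => ?_
      simp only [hf, Nat.forall_lt_succ_left]
      simp [hj]
    · refine mixedNorm_eq_zero (fun i hi => hq (i + 1) (by omega)) fun idx => ?_
      have := hf fun i => if i = 0 then j else idx (i - 1)
      simp only [Nat.forall_lt_succ_left] at this
      simpa [hj] using this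

theorem two_mul_div_two_pow_succ_add_one_lt {p j k : ℕ} (hj : j < 2 ^ p) (hk : k < p) :
    2 * (j / 2 ^ (k + 1)) + 1 < 2 ^ p := by
  have h₁ : j / 2 ^ (k + 1) ≤ j / 2 := by
    rw [pow_succ', ← Nat.div_div_eq_div_mul]; exact Nat.div_le_self _ _
  have h₂ : 2 ^ p = 2 * 2 ^ (p - 1) := by rw [← pow_succ']; congr 1; omega
  omega

theorem TformSupport_cons_iff {p j : ℕ} (hj : j < 2 ^ p) (idx : ℕ → ℕ) :
    TformSupport (p + 1) (fun i => if i = 0 then j else idx (i - 1)) ↔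
      ∀ k < p, idx k ∈ ({2 * (j / 2 ^ (k + 1)), 2 * (j / 2 ^ (k + 1)) + 1} : Finset ℕ) := by
  simp only [TformSupport, Nat.add_sub_cancel, if_pos, hj, true_and, Finset.mem_insert,
    Finset.mem_singleton]
  constructor
  · intro h k hk
    have := h (k + 1) (by omega) (by omega)
    rw [if_neg k.succ_ne_zero, Nat.add_sub_cancel] at this
    omega
  · intro h k hk hkp
    obtain ⟨k, rfl⟩ : ∃ k', k = k' + 1 := ⟨k - 1, by omega⟩
    have := h k (by omega)
    rw [if_neg k.succ_ne_zero, Nat.add_sub_cancel]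
    omega

theorem mixedNorm_Tmap (p : ℕ) {q : ℕ → ℝ} (hq : ∀ i < p + 1, q i ≠ 0) :
    mixedNorm (p + 1) (2 ^ p) q (fun idx => Tmap (p + 1) (2 ^ p) fun k => eVec (2 ^ p) (idx k))
      = 2 ^ (p * (1 / q 0) + ∑ k ∈ Finset.range p, 1 / q (k + 1)) := by
  have hrow (j : Fin (2 ^ p)) : mixedNorm p (2 ^ p) (fun i => q (i + 1)) (fun idx =>
      Tmap (p + 1) (2 ^ p) fun k => eVec (2 ^ p) (if (k : ℕ) = 0 then j else idx (k - 1)))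
      = ∏ k ∈ Finset.range p, (2 : ℝ) ^ (1 / q (k + 1)) := by
    rw [mixedNorm_indicator_pi
      (S := fun k => {2 * ((j : ℕ) / 2 ^ (k + 1)), 2 * ((j : ℕ) / 2 ^ (k + 1)) + 1})
      (fun i hi => hq (i + 1) (by omega))
      (fun k hk i hi => by
        simp only [Finset.mem_insert, Finset.mem_singleton] at hi
        have := two_mul_div_two_pow_succ_add_one_lt j.isLt hk
        omega)
      (fun idx => (abs_Tmap_eVec p fun i => if i = 0 then (j : ℕ) else idx (i - 1)).trans
        (by simp only [TformSupport_cons_iff j.isLt]))]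
    simp only [Finset.card_pair (Nat.ne_of_lt (Nat.lt_succ_self _)), Nat.cast_ofNat]
  rw [mixedNorm_succ_of_rows (S := Finset.range (2 ^ p))
      (X := ∏ k ∈ Finset.range p, (2 : ℝ) ^ (1 / q (k + 1))) (hq 0 p.succ_pos) (by positivity)
      (fun j hj => Finset.mem_range.1 hj) fun j => by
        rw [if_pos (Finset.mem_range.2 j.isLt)]; exact hrow j,
    Finset.card_range, Real.rpow_add two_pos, Real.rpow_sum_of_pos two_pos, Nat.cast_pow,
    Nat.cast_ofNat, ← Real.rpow_natCast, ← Real.rpow_mul zero_le_two]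

theorem stmt_5_general (m : ℕ) (hm : 2 ≤ m) (q : ℕ → ℝ)
    (hq : ∀ i < m, q i ∈ Set.Icc (1:ℝ) 2)
    (C : ℝ)
    (hC : ∀ n : ℕ, ∀ T : MultilinearMap ℝ (fun _ : Fin m => (Fin n → ℝ)) ℝ,
      mixedNorm m n q (fun idx => T fun k => eVec n (idx (k : ℕ)))
        ≤ C * supNorm m n T) :
    (2:ℝ) ^ ((((m : ℝ) - 1) * ((∏ i ∈ Finset.range m, q i) / q 0)
        + (∑ i ∈ Finset.Ico 1 m, (∏ i ∈ Finset.range m, q i) / q i)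
        - ((m : ℝ) - 1) * ∏ i ∈ Finset.range m, q i)
      / ∏ i ∈ Finset.range m, q i) ≤ C := by
  obtain ⟨p, rfl⟩ : ∃ p, m = p + 1 := ⟨m - 1, by omega⟩
  have hq0 : ∀ i < p + 1, q i ≠ 0 := fun i hi => (one_pos.trans_le (hq i hi).1).ne'
  set Q := ∏ i ∈ Finset.range (p + 1), q i
  have hQ : Q ≠ 0 := Finset.prod_ne_zero_iff.2 fun i hi => hq0 i (Finset.mem_range.1 hi)
  have hexp : ((((p + 1 : ℕ) : ℝ) - 1) * (Q / q 0) + ∑ i ∈ Finset.Ico 1 (p + 1), Q / q i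
      - (((p + 1 : ℕ) : ℝ) - 1) * Q) / Q
      = p * (1 / q 0) + ∑ k ∈ Finset.range p, 1 / q (k + 1) - p := by
    rw [Finset.sum_Ico_eq_sum_range, sub_div, add_div, Finset.sum_div]
    simp only [div_div_cancel_left' hQ, Nat.add_sub_cancel, add_comm 1, one_div]
    push_cast
    field_simp
    ring
  have hnorm := hC (2 ^ p) (Tmap (p + 1) (2 ^ p))
  rw [mixedNorm_Tmap p hq0] at hnorm
  have hC0 : 0 < C :=
    pos_of_mul_pos_left ((Real.rpow_pos_of_pos two_pos _).trans_le hnorm) (supNorm_nonneg ..)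
  rw [hexp, Real.rpow_sub two_pos, Real.rpow_natCast, div_le_iff₀ (by positivity)]
  exact hnorm.trans (mul_le_mul_of_nonneg_left (supNorm_Tmap_le _ _) hC0.le)

/-- Lower bound for the constants of the generalized mixed-norm inequality:
if `Σ 1/qᵢ = (m+1)/2` and the mixed-norm inequality with exponents
`(q₁,...,q_m)` holds with constant `C` for all real `m`-linear forms on
`(ℓ∞ⁿ)^m` and all `n`, then
`C ≥ 2^{((m-1)q̂₁ + Σ_{i=2}^m q̂ᵢ - (m-1)q₁⋯q_m)/(q₁⋯q_m)}` where
`q̂ᵢ = (q₁⋯q_m)/qᵢ`. -/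
theorem stmt_5 (m : ℕ) (hm : 2 ≤ m) (q : ℕ → ℝ)
    (hq : ∀ i < m, q i ∈ Set.Icc (1:ℝ) 2)
    (hsum : ∑ i ∈ Finset.range m, 1 / q i = ((m : ℝ) + 1) / 2)
    (C : ℝ)
    (hC : ∀ n : ℕ, ∀ T : MultilinearMap ℝ (fun _ : Fin m => (Fin n → ℝ)) ℝ,
      mixedNorm m n q (fun idx => T fun k => eVec n (idx (k : ℕ)))
        ≤ C * supNorm m n T) :
    (2:ℝ) ^ ((((m : ℝ) - 1) * ((∏ i ∈ Finset.range m, q i) / q 0)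
        + (∑ i ∈ Finset.Ico 1 m, (∏ i ∈ Finset.range m, q i) / q i)
        - ((m : ℝ) - 1) * ∏ i ∈ Finset.range m, q i)
      / ∏ i ∈ Finset.range m, q i) ≤ C :=
  stmt_5_general m hm q hq C hC
end

section
/- With L_m as defined (L_m(x⁽¹⁾,...,x⁽ᵐ⁾) = (x₁⁽¹⁾+x₂⁽¹⁾)T_{m-1}(x⁽²⁾,...,x⁽ᵐ⁾) + (x₁⁽¹⁾-x₂⁽¹⁾)T_{m-1}(B^{2^{m-2}}x⁽²⁾, B^{2^{m-2}}x⁽³⁾, ..., B²x⁽ᵐ⁾)), for all q₁,...,q_m ∈ [1,2] the iterated mixed sum (Σ_{j₁=1}^{2^{m-1}}(⋯(Σ_{j_m=1}^{2^{m-1}}|L_m(e_{j₁},...,e_{j_m})|^{q_m})^{q_{m-1}/q_m}⋯)^{q₁/q₂})^{1/q₁} equals 2^{((m-1)q̂₂ + Σ_{i≠2} q̂ᵢ)/(q₁⋯q_m)}, where q̂ᵢ = (q₁⋯q_m)/qᵢ. -/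
/-- The shift exponents in the definition of `L_m` (applied to the `k`-th
argument, 0-indexed, of `T_{m-1}`). -/
def Lshift (m k : ℕ) : ℕ := if k ≤ 1 then 2 ^ (m - 2) else 2 ^ (m - 1 - k)

/-- The `m`-linear forms `L_m` (for `m ≥ 3`):
`L_m(x⁽¹⁾,...,x⁽ᵐ⁾) = (x₁⁽¹⁾+x₂⁽¹⁾)T_{m-1}(x⁽²⁾,...,x⁽ᵐ⁾)
  + (x₁⁽¹⁾-x₂⁽¹⁾)T_{m-1}(B^{2^{m-2}}x⁽²⁾, B^{2^{m-2}}x⁽³⁾, B^{2^{m-3}}x⁽⁴⁾, ..., B²x⁽ᵐ⁾)`. -/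
noncomputable def Lform (m : ℕ) (x : ℕ → ℕ → ℝ) : ℝ :=
  (x 0 0 + x 0 1) * Tform (m - 1) (fun k => x (k + 1))
    + (x 0 0 - x 0 1) * Tform (m - 1) (fun k j => x (k + 1) (j + Lshift m k))

/-- indicator of the (translated by `c`) support of `T_r` on basis vectors -/
noncomputable def DInd : ℕ → (ℕ → ℕ) → (ℕ → ℕ) → ℝ
  | 0, _, _ => 0
  | 1, _, _ => 0
  | 2, c, idx => (if idx 0 = c 0 ∨ idx 0 = c 0 + 1 then 1 else 0)
      * (if idx 1 = c 1 ∨ idx 1 = c 1 + 1 then 1 else 0)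
  | (r + 3), c, idx => (if idx (r + 2) = c (r + 2) ∨ idx (r + 2) = c (r + 2) + 1 then 1 else 0)
      * (DInd (r + 2) c idx + DInd (r + 2) (fun k => c k + Tshift (r + 2) k) idx)

lemma DInd_supp : ∀ r c idx, DInd r c idx ≠ 0 → c 0 ≤ idx 0 ∧ idx 0 < c 0 + 2 ^ (r - 1) := by
  intro r
  induction r using Nat.strong_induction_on with
  | _ r ih =>
    match r with
    | 0 => intro c idx h; simp [DInd] at h
    | 1 => intro c idx h; simp [DInd] at h
    | 2 =>
      intro c idx h
      simp only [DInd, mul_ne_zero_iff, ne_eq, ite_eq_right_iff, not_forall] at h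
      obtain ⟨⟨h0, -⟩, -⟩ := h
      omega
    | (r + 3) =>
      intro c idx h
      simp only [DInd, mul_ne_zero_iff] at h
      obtain ⟨-, h2⟩ := h
      have : DInd (r + 2) c idx ≠ 0 ∨ DInd (r + 2) (fun k => c k + Tshift (r + 2) k) idx ≠ 0 := by
        by_contra hc; push_neg at hc; rw [hc.1, hc.2] at h2; simp at h2
      have hts : Tshift (r + 2) 0 = 2 ^ (r + 1) := by simp [Tshift]
      have e1 : (r + 2) - 1 = r + 1 := rfl
      have e2 : (r + 3) - 1 = r + 2 := rfl
      have h2 : (2:ℕ) ^ (r + 1) + 2 ^ (r + 1) = 2 ^ (r + 2) := by ring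
      rw [e2]
      rcases this with h' | h'
      · have := ih (r + 2) (by omega) c idx h'
        rw [e1] at this
        omega
      · have := ih (r + 2) (by omega) _ idx h'
        rw [e1, hts] at this
        omega

lemma DInd_mem : ∀ r c idx, DInd r c idx = 0 ∨ DInd r c idx = 1 := by
  intro r
  induction r using Nat.strong_induction_on with
  | _ r ih =>
    match r with
    | 0 => intro c idx; left; rfl
    | 1 => intro c idx; left; rfl
    | 2 =>
      intro c idx
      unfold DInd
      split <;> split <;> simp
    | (r + 3) =>
      intro c idx
      unfold DInd
      have h1 := ih (r + 2) (by omega) c idx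
      have h2 := ih (r + 2) (by omega) (fun k => c k + Tshift (r + 2) k) idx
      have hdisj : DInd (r + 2) c idx = 0 ∨ DInd (r + 2) (fun k => c k + Tshift (r + 2) k) idx = 0 := by
        by_contra hc; push_neg at hc
        have l1 := DInd_supp _ _ _ hc.1
        have l2 := DInd_supp _ _ _ hc.2
        have hts : Tshift (r + 2) 0 = 2 ^ (r + 1) := by simp [Tshift]
        have e1 : (r + 2) - 1 = r + 1 := rfl
        rw [e1] at l1 l2
        rw [hts] at l2
        omega
      split
      · rcases hdisj with h | h <;> rw [h] <;> simp <;> tauto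
      · left; ring

lemma DInd_congr : ∀ r c (idx idx' : ℕ → ℕ), (∀ k < r, idx k = idx' k) →
    DInd r c idx = DInd r c idx' := by
  intro r
  induction r using Nat.strong_induction_on with
  | _ r ih =>
    match r with
    | 0 => intros; rfl
    | 1 => intros; rfl
    | 2 =>
      intro c idx idx' h
      unfold DInd
      rw [h 0 (by omega), h 1 (by omega)]
    | (r + 3) =>
      intro c idx idx' h
      unfold DInd
      rw [h (r + 2) (by omega), ih (r + 2) (by omega) c idx idx' (fun k hk => h k (by omega)),
        ih (r + 2) (by omega) _ idx idx' (fun k hk => h k (by omega))]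

lemma abs_add_of_disj (A B : ℝ) (h : A = 0 ∨ B = 0) :
    |A + B| = |A| + |B| ∧ |A - B| = |A| + |B| := by
  rcases h with h | h <;> simp [h, abs_neg]

lemma Tform_ind : ∀ r, 2 ≤ r → ∀ (c idx : ℕ → ℕ),
    |Tform r (fun k j => if j + c k = idx k then (1:ℝ) else 0)| = DInd r c idx := by
  intro r
  induction r using Nat.strong_induction_on with
  | _ r ih =>
    match r with
    | 0 => intro h; exact absurd h (by norm_num)
    | 1 => intro h; exact absurd h (by norm_num)
    | 2 =>
      intro _ c idx
      have e0 : ∀ a b : ℕ, (0 + a = b) = (b = a) := fun a b => propext (by omega)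
      have e1 : ∀ a b : ℕ, (1 + a = b) = (b = a + 1) := fun a b => propext (by omega)
      simp only [Tform, DInd, e0, e1]
      by_cases h0 : idx 0 = c 0 <;> by_cases h0' : idx 0 = c 0 + 1 <;>
        by_cases h1 : idx 1 = c 1 <;> by_cases h1' : idx 1 = c 1 + 1 <;>
        simp [h0, h0', h1, h1'] <;> omega
    | (r + 3) =>
      intro _ c idx
      have key : (fun k j => if (j + Tshift (r + 2) k) + c k = idx k then (1:ℝ) else 0)
          = (fun k j => if j + (c k + Tshift (r + 2) k) = idx k then (1:ℝ) else 0) := by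
        funext k j
        have h : j + Tshift (r + 2) k + c k = j + (c k + Tshift (r + 2) k) := by omega
        rw [h]
      have iA := ih (r + 2) (by omega) (by omega) c idx
      have iB := ih (r + 2) (by omega) (by omega) (fun k => c k + Tshift (r + 2) k) idx
      set A := Tform (r + 2) (fun k j => if j + c k = idx k then (1:ℝ) else 0) with hA
      set B := Tform (r + 2) (fun k j => if j + (c k + Tshift (r + 2) k) = idx k then (1:ℝ) else 0) with hB
      have hdisj : A = 0 ∨ B = 0 := by
        by_contra hc; push_neg at hc
        have l1 := DInd_supp (r + 2) c idx (by rw [← iA]; simpa using hc.1)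
        have l2 := DInd_supp (r + 2) _ idx (by rw [← iB]; simpa using hc.2)
        have e1 : (r + 2) - 1 = r + 1 := rfl
        have hts : Tshift (r + 2) 0 = 2 ^ (r + 1) := by simp [Tshift]
        rw [e1] at l1 l2
        rw [hts] at l2
        omega
      have habs := abs_add_of_disj _ _ hdisj
      rw [Tform]
      simp only [key, ← hA, ← hB]
      rw [DInd]
      by_cases h0 : idx (r+2) = c (r+2) <;> by_cases h1 : idx (r+2) = c (r+2) + 1
      · omega
      · rw [if_pos (show (0:ℕ) + c (r+2) = idx (r+2) by omega),
          if_neg (show ¬ ((1:ℕ) + c (r+2) = idx (r+2)) by omega),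
          if_pos (Or.inl h0)]
        have e : ((1:ℝ) + 0) * A + (1 - 0) * B = A + B := by ring
        rw [e, habs.1, iA, iB, one_mul]
      · rw [if_neg (show ¬ ((0:ℕ) + c (r+2) = idx (r+2)) by omega),
          if_pos (show (1:ℕ) + c (r+2) = idx (r+2) by omega),
          if_pos (Or.inr h1)]
        have e : ((0:ℝ) + 1) * A + (0 - 1) * B = A - B := by ring
        rw [e, habs.2, iA, iB, one_mul]
      · rw [if_neg (show ¬ ((0:ℕ) + c (r+2) = idx (r+2)) by omega),
          if_neg (show ¬ ((1:ℕ) + c (r+2) = idx (r+2)) by omega),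
          if_neg (by omega)]
        have e : ((0:ℝ) + 0) * A + (0 - 0) * B = 0 := by ring
        rw [e, abs_zero, zero_mul]

lemma Lform_ind (m : ℕ) (hm : 3 ≤ m) (idx : ℕ → ℕ) :
    |Lform m (fun k j => if j = idx k then (1:ℝ) else 0)| =
      (if idx 0 = 0 ∨ idx 0 = 1 then 1 else 0) *
        (DInd (m - 1) (fun _ => 0) (fun k => idx (k + 1))
          + DInd (m - 1) (Lshift m) (fun k => idx (k + 1))) := by
  unfold Lform
  have key1 : (fun k j => if j = idx (k + 1) then (1:ℝ) else 0)
      = (fun k j => if j + (fun _ : ℕ => 0) k = idx (k + 1) then (1:ℝ) else 0) := by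
    funext k j; simp
  have key2 : (fun k j => if j + Lshift m k = idx (k + 1) then (1:ℝ) else 0)
      = (fun k j => if j + Lshift m k = (fun k => idx (k + 1)) k then (1:ℝ) else 0) := rfl
  have iA := Tform_ind (m - 1) (by omega) (fun _ => 0) (fun k => idx (k + 1))
  have iB := Tform_ind (m - 1) (by omega) (Lshift m) (fun k => idx (k + 1))
  set A := Tform (m - 1) (fun k j => if j + (fun _ : ℕ => 0) k = idx (k + 1) then (1:ℝ) else 0) with hA
  set B := Tform (m - 1) (fun k j => if j + Lshift m k = idx (k + 1) then (1:ℝ) else 0) with hB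
  have hdisj : A = 0 ∨ B = 0 := by
    by_contra hc; push_neg at hc
    have l1 := DInd_supp (m - 1) (fun _ => 0) (fun k => idx (k + 1))
      (by rw [← iA]; exact abs_ne_zero.mpr hc.1)
    have l2 := DInd_supp (m - 1) (Lshift m) (fun k => idx (k + 1))
      (by rw [← iB]; exact abs_ne_zero.mpr hc.2)
    have hls : Lshift m 0 = 2 ^ (m - 2) := by simp [Lshift]
    have e1 : m - 1 - 1 = m - 2 := by omega
    rw [e1] at l1 l2
    rw [hls] at l2
    beta_reduce at l1 l2
    omega
  have habs := abs_add_of_disj _ _ hdisj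
  beta_reduce
  have e0 : ((0:ℕ) = idx 0) = (idx 0 = 0) := propext (by omega)
  have e1 : ((1:ℕ) = idx 0) = (idx 0 = 1) := propext (by omega)
  simp only [e0, e1]
  rw [show Tform (m - 1) (fun k j => if j = idx (k + 1) then (1:ℝ) else 0) = A from by
    rw [hA, ← key1]]
  by_cases h0 : idx 0 = 0 <;> by_cases h1 : idx 0 = 1
  · omega
  · rw [if_pos h0, if_neg h1, if_pos (Or.inl h0)]
    have e : ((1:ℝ) + 0) * A + (1 - 0) * B = A + B := by ring
    rw [e, habs.1, iA, iB, one_mul]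
  · rw [if_neg h0, if_pos h1, if_pos (Or.inr h1)]
    have e : ((0:ℝ) + 1) * A + (0 - 1) * B = A - B := by ring
    rw [e, habs.2, iA, iB, one_mul]
  · rw [if_neg h0, if_neg h1, if_neg (by tauto)]
    have e : ((0:ℝ) + 0) * A + (0 - 0) * B = 0 := by ring
    rw [e, abs_zero, zero_mul]

lemma mixedNorm_nonneg : ∀ m N q f, 0 ≤ mixedNorm m N q f := by
  intro m
  induction m with
  | zero => intro N q f; exact abs_nonneg _
  | succ m ih =>
    intro N q f
    rw [mixedNorm]
    exact Real.rpow_nonneg (Finset.sum_nonneg fun j _ => Real.rpow_nonneg (ih _ _ _) _) _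

lemma mixedNorm_congr : ∀ m N q (f g : (ℕ → ℕ) → ℝ), (∀ idx, |f idx| = |g idx|) →
    mixedNorm m N q f = mixedNorm m N q g := by
  intro m
  induction m with
  | zero => intro N q f g h; exact h _
  | succ m ih =>
    intro N q f g h
    rw [mixedNorm, mixedNorm]
    congr 1
    refine Finset.sum_congr rfl fun j _ => ?_
    congr 1
    exact ih _ _ _ _ fun idx => h _

lemma mixedNorm_zero : ∀ m N q (f : (ℕ → ℕ) → ℝ), (∀ i < m, 0 < q i) → (∀ idx, f idx = 0) →
    mixedNorm m N q f = 0 := by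
  intro m
  induction m with
  | zero => intro N q f _ h; rw [mixedNorm]; rw [h]; exact abs_zero
  | succ m ih =>
    intro N q f hq h
    rw [mixedNorm]
    have : ∀ j : Fin N, mixedNorm m N (fun i => q (i + 1))
        (fun idx => f (fun i => if i = 0 then (j : ℕ) else idx (i - 1))) = 0 := by
      intro j
      exact ih _ _ _ (fun i hi => hq (i + 1) (by omega)) (fun idx => h _)
    simp only [this]
    have hq0 : q 0 ≠ 0 := ne_of_gt (hq 0 (by omega))
    rw [Real.zero_rpow hq0, Finset.sum_const, smul_zero,
      Real.zero_rpow (by simpa using hq0)]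

lemma mixedNorm_smul : ∀ m N q (a : ℝ) (f : (ℕ → ℕ) → ℝ), 0 ≤ a → (∀ i < m, 0 < q i) →
    mixedNorm m N q (fun idx => a * f idx) = a * mixedNorm m N q f := by
  intro m
  induction m with
  | zero => intro N q a f ha _; rw [mixedNorm, mixedNorm, abs_mul, abs_of_nonneg ha]
  | succ m ih =>
    intro N q a f ha hq
    rw [mixedNorm, mixedNorm]
    have hq0 : (0:ℝ) < q 0 := hq 0 (by omega)
    have : ∀ j : Fin N, mixedNorm m N (fun i => q (i + 1))
        (fun idx => a * f (fun i => if i = 0 then (j : ℕ) else idx (i - 1)))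
        = a * mixedNorm m N (fun i => q (i + 1))
            (fun idx => f (fun i => if i = 0 then (j : ℕ) else idx (i - 1))) := by
      intro j
      exact ih _ _ _ _ ha (fun i hi => hq (i + 1) (by omega))
    simp only [this]
    have h2 : ∀ j : Fin N, (a * mixedNorm m N (fun i => q (i + 1))
        (fun idx => f (fun i => if i = 0 then (j : ℕ) else idx (i - 1)))) ^ q 0
        = a ^ q 0 * (mixedNorm m N (fun i => q (i + 1))
            (fun idx => f (fun i => if i = 0 then (j : ℕ) else idx (i - 1)))) ^ q 0 := by
      intro j
      exact Real.mul_rpow ha (mixedNorm_nonneg _ _ _ _)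
    simp only [h2]
    rw [← Finset.mul_sum, Real.mul_rpow (Real.rpow_nonneg ha _)
      (Finset.sum_nonneg fun j _ => Real.rpow_nonneg (mixedNorm_nonneg _ _ _ _) _),
      ← Real.rpow_mul ha, mul_one_div_cancel (ne_of_gt hq0), Real.rpow_one]

lemma mixedNorm_snoc : ∀ m N q (f : (ℕ → ℕ) → ℝ),
    mixedNorm (m + 1) N q f = mixedNorm m N q (fun idx =>
      (∑ j : Fin N, |f (fun i => if i = m then (j : ℕ) else idx i)| ^ q m) ^ (1 / q m)) := by
  intro m
  induction m with
  | zero =>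
    intro N q f
    rw [mixedNorm, mixedNorm]
    rw [abs_of_nonneg (Real.rpow_nonneg (Finset.sum_nonneg fun j _ =>
      Real.rpow_nonneg (abs_nonneg _) _) _)]
    congr 1
  | succ m ih =>
    intro N q f
    rw [mixedNorm]
    conv_rhs => rw [mixedNorm]
    congr 1
    refine Finset.sum_congr rfl fun j0 _ => ?_
    congr 1
    rw [ih]
    congr 1
    funext idx
    congr 1
    refine Finset.sum_congr rfl fun j _ => ?_
    congr 1
    refine congrArg abs (congrArg f (funext fun i => ?_))
    by_cases hi0 : i = 0
    · subst hi0; simp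
    · by_cases him : i = m + 1
      · subst him; simp [hi0]
      · have h1 : i - 1 ≠ m := by omega
        simp [hi0, him, h1]

lemma mixedNorm_split (m N : ℕ) (q : ℕ → ℝ) (f g : (ℕ → ℕ) → ℝ) (c : ℕ)
    (hq : ∀ i < m + 1, 0 < q i)
    (hf : ∀ idx, f idx ≠ 0 → idx 0 < c) (hg : ∀ idx, g idx ≠ 0 → c ≤ idx 0) :
    mixedNorm (m + 1) N q (fun idx => f idx + g idx)
      = ((mixedNorm (m + 1) N q f) ^ q 0 + (mixedNorm (m + 1) N q g) ^ q 0) ^ (1 / q 0) := by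
  have hq0 : (0:ℝ) < q 0 := hq 0 (by omega)
  have hq' : ∀ i < m, 0 < q (i + 1) := fun i hi => hq (i + 1) (by omega)
  have hrr : ∀ x : ℝ, 0 ≤ x → (x ^ (1 / q 0)) ^ q 0 = x := fun x hx => by
    rw [← Real.rpow_mul hx, one_div_mul_cancel (ne_of_gt hq0), Real.rpow_one]
  simp only [mixedNorm]
  have key : ∀ j : Fin N,
      (mixedNorm m N (fun i => q (i + 1))
        (fun idx => f (fun i => if i = 0 then (j : ℕ) else idx (i - 1))
          + g (fun i => if i = 0 then (j : ℕ) else idx (i - 1)))) ^ q 0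
      = (mixedNorm m N (fun i => q (i + 1))
          (fun idx => f (fun i => if i = 0 then (j : ℕ) else idx (i - 1)))) ^ q 0
        + (mixedNorm m N (fun i => q (i + 1))
            (fun idx => g (fun i => if i = 0 then (j : ℕ) else idx (i - 1)))) ^ q 0 := by
    intro j
    by_cases hj : (j : ℕ) < c
    · have hz : ∀ idx : ℕ → ℕ, g (fun i => if i = 0 then (j : ℕ) else idx (i - 1)) = 0 := by
        intro idx
        by_contra h
        have := hg _ h
        simp at this
        omega
      have e1 : (fun idx : ℕ → ℕ => f (fun i => if i = 0 then (j : ℕ) else idx (i - 1))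
          + g (fun i => if i = 0 then (j : ℕ) else idx (i - 1)))
          = fun idx => f (fun i => if i = 0 then (j : ℕ) else idx (i - 1)) :=
        funext fun idx => by rw [hz idx, add_zero]
      rw [e1, mixedNorm_zero m N _ _ hq' hz, Real.zero_rpow (ne_of_gt hq0), add_zero]
    · have hz : ∀ idx : ℕ → ℕ, f (fun i => if i = 0 then (j : ℕ) else idx (i - 1)) = 0 := by
        intro idx
        by_contra h
        have := hf _ h
        simp at this
        omega
      have e1 : (fun idx : ℕ → ℕ => f (fun i => if i = 0 then (j : ℕ) else idx (i - 1))
          + g (fun i => if i = 0 then (j : ℕ) else idx (i - 1)))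
          = fun idx => g (fun i => if i = 0 then (j : ℕ) else idx (i - 1)) :=
        funext fun idx => by rw [hz idx, zero_add]
      rw [e1, mixedNorm_zero m N _ _ hq' hz, Real.zero_rpow (ne_of_gt hq0), zero_add]
  simp only [key]
  rw [Finset.sum_add_distrib,
    hrr _ (Finset.sum_nonneg fun j _ => Real.rpow_nonneg (mixedNorm_nonneg _ _ _ _) _),
    hrr _ (Finset.sum_nonneg fun j _ => Real.rpow_nonneg (mixedNorm_nonneg _ _ _ _) _)]

lemma rpow_ind (x p : ℝ) (hx : x = 0 ∨ x = 1) (hp : p ≠ 0) : x ^ p = x := by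
  rcases hx with h | h <;> rw [h]
  · exact Real.zero_rpow hp
  · exact Real.one_rpow p

lemma sum_ind (N a : ℕ) (h : a < N) :
    ∑ j : Fin N, (if (j : ℕ) = a then (1:ℝ) else 0) = 1 := by
  rw [Finset.sum_eq_single (⟨a, h⟩ : Fin N)]
  · simp
  · intro b _ hb
    rw [if_neg]
    intro hc
    exact hb (Fin.ext hc)
  · intro hmem
    exact absurd (Finset.mem_univ _) hmem

lemma sum_pair (N a : ℕ) (h : a + 1 < N) :
    ∑ j : Fin N, (if (j : ℕ) = a ∨ (j : ℕ) = a + 1 then (1:ℝ) else 0) = 2 := by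
  have e : ∀ j : Fin N, (if (j : ℕ) = a ∨ (j : ℕ) = a + 1 then (1:ℝ) else 0)
      = (if (j : ℕ) = a then (1:ℝ) else 0) + (if (j : ℕ) = a + 1 then (1:ℝ) else 0) := by
    intro j
    by_cases h1 : (j : ℕ) = a <;> by_cases h2 : (j : ℕ) = a + 1 <;> simp [h1, h2] <;> omega
  simp only [e]
  rw [Finset.sum_add_distrib, sum_ind N a (by omega), sum_ind N (a + 1) h]
  norm_num

lemma ind_mul_rpow (P : Prop) [Decidable P] (K p : ℝ) (hp : p ≠ 0) :
    ((if P then (1:ℝ) else 0) * K) ^ p = (if P then (1:ℝ) else 0) * K ^ p := by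
  by_cases h : P <;> simp [h, Real.zero_rpow hp]

lemma normDInd : ∀ r, 2 ≤ r → ∀ (N : ℕ) (q : ℕ → ℝ) (c : ℕ → ℕ), (∀ k < r, 0 < q k) →
    (∀ k < r, c k + 2 ^ (r - 1) ≤ N) →
    mixedNorm r N q (fun idx => DInd r c idx) =
      2 ^ (((r : ℝ) - 2) / q 0 + ∑ k ∈ Finset.range r, 1 / q k) := by
  intro r hr
  induction r, hr using Nat.le_induction with
  | base =>
    intro N q c hq hc
    have hq0 : (0:ℝ) < q 0 := hq 0 (by omega)
    have hq1 : (0:ℝ) < q 1 := hq 1 (by omega)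
    have hc0 : c 0 + 2 ≤ N := by have := hc 0 (by omega); simpa using this
    have hc1 : c 1 + 2 ≤ N := by have := hc 1 (by omega); simpa using this
    rw [mixedNorm_snoc 1 N q]
    have eG : (fun idx : ℕ → ℕ => (∑ j : Fin N,
          |DInd 2 c (fun i => if i = 1 then (j : ℕ) else idx i)| ^ q 1) ^ (1 / q 1))
        = fun idx => (if idx 0 = c 0 ∨ idx 0 = c 0 + 1 then (1:ℝ) else 0) * 2 ^ (1 / q 1) := by
      funext idx
      have term : ∀ j : Fin N, |DInd 2 c (fun i => if i = 1 then (j : ℕ) else idx i)| ^ q 1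
          = (if idx 0 = c 0 ∨ idx 0 = c 0 + 1 then (1:ℝ) else 0)
            * (if (j : ℕ) = c 1 ∨ (j : ℕ) = c 1 + 1 then (1:ℝ) else 0) := by
        intro j
        have ev : DInd 2 c (fun i => if i = 1 then (j : ℕ) else idx i)
            = (if idx 0 = c 0 ∨ idx 0 = c 0 + 1 then (1:ℝ) else 0)
              * (if (j : ℕ) = c 1 ∨ (j : ℕ) = c 1 + 1 then (1:ℝ) else 0) := by
          rw [DInd]
          norm_num
        rw [ev, abs_of_nonneg (by positivity)]
        refine rpow_ind _ _ ?_ (ne_of_gt hq1)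
        by_cases h1 : idx 0 = c 0 ∨ idx 0 = c 0 + 1 <;>
          by_cases h2 : (j : ℕ) = c 1 ∨ (j : ℕ) = c 1 + 1 <;> simp [h1, h2]
      simp only [term]
      rw [← Finset.mul_sum, sum_pair N (c 1) (by omega)]
      by_cases h : idx 0 = c 0 ∨ idx 0 = c 0 + 1
      · rw [if_pos h, one_mul, one_mul]
      · rw [if_neg h, zero_mul, zero_mul, Real.zero_rpow (one_div_ne_zero (ne_of_gt hq1))]
    rw [eG, mixedNorm_snoc 0 N q]
    rw [mixedNorm]
    simp only [if_true]
    have term2 : ∀ j : Fin N,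
        |(if ((j:ℕ)) = c 0 ∨ ((j:ℕ)) = c 0 + 1 then (1:ℝ) else 0) * 2 ^ (1 / q 1)| ^ q 0
        = (if (j : ℕ) = c 0 ∨ (j : ℕ) = c 0 + 1 then (1:ℝ) else 0) * (2 ^ (1 / q 1)) ^ q 0 := by
      intro j
      rw [abs_of_nonneg (by positivity), ind_mul_rpow _ _ _ (ne_of_gt hq0)]
    simp only [term2]
    rw [abs_of_nonneg (Real.rpow_nonneg (Finset.sum_nonneg fun j _ => by positivity) _)]
    rw [← Finset.sum_mul, sum_pair N (c 0) (by omega)]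
    rw [← Real.rpow_mul (by norm_num : (0:ℝ) ≤ 2)]
    rw [show (2:ℝ) * 2 ^ (1 / q 1 * q 0) = 2 ^ (1 + 1 / q 1 * q 0) from by
      rw [Real.rpow_add (by norm_num : (0:ℝ) < 2), Real.rpow_one]]
    rw [← Real.rpow_mul (by norm_num : (0:ℝ) ≤ 2)]
    congr 1
    rw [Finset.sum_range_succ, Finset.sum_range_one]
    push_cast
    field_simp
    ring
  | succ n hn ih =>
    intro N q c hq hc
    obtain ⟨u, rfl⟩ : ∃ u, n = u + 2 := ⟨n - 2, by omega⟩
    have hq0 : (0:ℝ) < q 0 := hq 0 (by omega)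
    have hqlast : (0:ℝ) < q (u + 2) := hq (u + 2) (by omega)
    set c' : ℕ → ℕ := fun k => c k + Tshift (u + 2) k with hc'
    rw [mixedNorm_snoc (u + 2) N q]
    have eG : (fun idx : ℕ → ℕ => (∑ j : Fin N,
          |DInd (u + 2 + 1) c (fun i => if i = u + 2 then (j : ℕ) else idx i)| ^ q (u + 2))
            ^ (1 / q (u + 2)))
        = fun idx => (2:ℝ) ^ (1 / q (u + 2)) * (DInd (u + 2) c idx + DInd (u + 2) c' idx) := by
      funext idx
      have hS01 : DInd (u + 2) c idx + DInd (u + 2) c' idx = 0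
          ∨ DInd (u + 2) c idx + DInd (u + 2) c' idx = 1 := by
        have m1 := DInd_mem (u + 2) c idx
        have m2 := DInd_mem (u + 2) c' idx
        have hdisj : DInd (u + 2) c idx = 0 ∨ DInd (u + 2) c' idx = 0 := by
          by_contra hcon; push_neg at hcon
          have l1 := DInd_supp (u + 2) c idx hcon.1
          have l2 := DInd_supp (u + 2) c' idx hcon.2
          have e1 : (u + 2) - 1 = u + 1 := rfl
          have hts : c' 0 = c 0 + 2 ^ (u + 1) := by simp [hc', Tshift]
          rw [e1] at l1 l2
          rw [hts] at l2
          omega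
        rcases hdisj with h | h <;> rw [h] <;> simp <;> tauto
      have term : ∀ j : Fin N,
          |DInd (u + 2 + 1) c (fun i => if i = u + 2 then (j : ℕ) else idx i)| ^ q (u + 2)
          = (if (j : ℕ) = c (u + 2) ∨ (j : ℕ) = c (u + 2) + 1 then (1:ℝ) else 0)
            * (DInd (u + 2) c idx + DInd (u + 2) c' idx) := by
        intro j
        have ev : DInd (u + 2 + 1) c (fun i => if i = u + 2 then (j : ℕ) else idx i)
            = (if (j : ℕ) = c (u + 2) ∨ (j : ℕ) = c (u + 2) + 1 then (1:ℝ) else 0)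
              * (DInd (u + 2) c idx + DInd (u + 2) c' idx) := by
          rw [show u + 2 + 1 = u + 3 from rfl, DInd]
          rw [if_pos rfl]
          rw [DInd_congr (u + 2) c _ idx (fun k hk => by rw [if_neg (by omega)]),
            DInd_congr (u + 2) c' _ idx (fun k hk => by rw [if_neg (by omega)])]
        rw [ev]
        have hval : (if (j : ℕ) = c (u + 2) ∨ (j : ℕ) = c (u + 2) + 1 then (1:ℝ) else 0)
            * (DInd (u + 2) c idx + DInd (u + 2) c' idx) = 0
            ∨ (if (j : ℕ) = c (u + 2) ∨ (j : ℕ) = c (u + 2) + 1 then (1:ℝ) else 0)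
            * (DInd (u + 2) c idx + DInd (u + 2) c' idx) = 1 := by
          by_cases h : (j : ℕ) = c (u + 2) ∨ (j : ℕ) = c (u + 2) + 1
          · rw [if_pos h, one_mul]; exact hS01
          · left; rw [if_neg h, zero_mul]
        rw [abs_of_nonneg (by rcases hval with h | h <;> rw [h] <;> norm_num)]
        exact rpow_ind _ _ hval (ne_of_gt hqlast)
      simp only [term]
      rw [← Finset.sum_mul, sum_pair N (c (u + 2)) (by
        have h1 := hc (u + 2) (by omega)
        have h2 : (2:ℕ) ≤ 2 ^ (u + 2 + 1 - 1) := by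
          calc (2:ℕ) = 2 ^ 1 := rfl
          _ ≤ 2 ^ (u + 2) := Nat.pow_le_pow_right (by norm_num) (by omega)
        omega)]
      rcases hS01 with h | h <;> rw [h]
      · rw [mul_zero, mul_zero, Real.zero_rpow (one_div_ne_zero (ne_of_gt hqlast))]
      · rw [mul_one, mul_one]
    rw [eG]
    rw [mixedNorm_smul (u + 2) N q _ _ (Real.rpow_nonneg (by norm_num) _)
      (fun i hi => hq i (by omega))]
    rw [mixedNorm_split (u + 1) N q _ _ (c 0 + 2 ^ (u + 1))
      (fun i hi => hq i (by omega))
      (fun idx h => by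
        have := DInd_supp (u + 2) c idx h
        have e1 : (u + 2) - 1 = u + 1 := rfl
        rw [e1] at this
        omega)
      (fun idx h => by
        have := DInd_supp (u + 2) c' idx h
        have e1 : (u + 2) - 1 = u + 1 := rfl
        have hts : c' 0 = c 0 + 2 ^ (u + 1) := by simp [hc', Tshift]
        rw [e1, hts] at this
        omega)]
    have hcond1 : ∀ k < u + 2, c k + 2 ^ (u + 2 - 1) ≤ N := by
      intro k hk
      have h1 := hc k (by omega)
      have h2 : (2:ℕ) ^ (u + 2 - 1) ≤ 2 ^ (u + 2 + 1 - 1) :=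
        Nat.pow_le_pow_right (by norm_num) (by omega)
      omega
    have hcond2 : ∀ k < u + 2, c' k + 2 ^ (u + 2 - 1) ≤ N := by
      intro k hk
      have h1 := hc k (by omega)
      have hTs : Tshift (u + 2) k ≤ 2 ^ (u + 1) := by
        unfold Tshift
        split
        · exact le_refl _
        · exact Nat.pow_le_pow_right (by norm_num) (by omega)
      have e1 : (u + 2) - 1 = u + 1 := rfl
      have e2 : (u + 2 + 1) - 1 = u + 2 := rfl
      rw [e1]
      rw [e2] at h1
      have e3 : (2:ℕ) ^ (u + 2) = 2 ^ (u + 1) + 2 ^ (u + 1) := by ring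
      simp only [hc']
      omega
    rw [ih N q c (fun k hk => hq k (by omega)) hcond1,
      ih N q c' (fun k hk => hq k (by omega)) hcond2]
    -- algebra
    set E : ℝ := (↑(u + 2) - 2) / q 0 + ∑ k ∈ Finset.range (u + 2), 1 / q k with hE
    rw [← Real.rpow_mul (by norm_num : (0:ℝ) ≤ 2) E (q 0)]
    rw [show (2:ℝ) ^ (E * q 0) + 2 ^ (E * q 0) = 2 ^ ((1:ℝ) + E * q 0) from by
      rw [Real.rpow_add (by norm_num : (0:ℝ) < 2), Real.rpow_one]; ring]
    rw [← Real.rpow_mul (by norm_num : (0:ℝ) ≤ 2)]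
    rw [← Real.rpow_add (by norm_num : (0:ℝ) < 2)]
    congr 1
    rw [show ∑ k ∈ Finset.range (u + 2 + 1), 1 / q k
        = (∑ k ∈ Finset.range (u + 2), 1 / q k) + 1 / q (u + 2) from Finset.sum_range_succ _ _,
      hE]
    push_cast
    field_simp
    ring

/-- The iterated mixed sum of `|L_m(e_{j₁},...,e_{j_m})|` with exponents
`q₁,...,q_m ∈ [1,2]` equals `2^{((m-1)q̂₂ + Σ_{i≠2} q̂ᵢ)/(q₁⋯q_m)}`, where
`q̂ᵢ = (q₁⋯q_m)/qᵢ`. -/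
theorem stmt_11 (m : ℕ) (hm : 3 ≤ m) (q : ℕ → ℝ)
    (hq : ∀ i < m, q i ∈ Set.Icc (1:ℝ) 2) :
    mixedNorm m (2 ^ (m - 1)) q
        (fun idx => Lform m (fun k j => if j = idx k then 1 else 0))
      = (2:ℝ) ^ ((((m : ℝ) - 1) * ((∏ i ∈ Finset.range m, q i) / q 1)
            + ∑ i ∈ (Finset.range m).erase 1, (∏ i ∈ Finset.range m, q i) / q i)
          / ∏ i ∈ Finset.range m, q i) := by
  obtain ⟨u, rfl⟩ : ∃ u, m = u + 3 := ⟨m - 3, by omega⟩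
  set m := u + 3 with hm3
  have hqpos : ∀ i < m, (0:ℝ) < q i := fun i hi => lt_of_lt_of_le one_pos (hq i hi).1
  have hq0 : (0:ℝ) < q 0 := hqpos 0 (by omega)
  have hq1 : (0:ℝ) < q 1 := hqpos 1 (by omega)
  set N : ℕ := 2 ^ (m - 1) with hN
  have hN2 : N = 2 ^ (u + 2) := rfl
  -- replace by the indicator form
  rw [mixedNorm_congr m N q _ (fun idx =>
      (if idx 0 = 0 ∨ idx 0 = 1 then (1:ℝ) else 0) *
        (DInd (m - 1) (fun _ => 0) (fun k => idx (k + 1))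
          + DInd (m - 1) (Lshift m) (fun k => idx (k + 1))))
    (fun idx => by
      rw [Lform_ind m (by omega) idx]
      rw [abs_of_nonneg]
      beta_reduce
      have d1 := DInd_mem (m - 1) (fun _ => 0) (fun k => idx (k + 1))
      have d2 := DInd_mem (m - 1) (Lshift m) (fun k => idx (k + 1))
      have : (0:ℝ) ≤ DInd (m - 1) (fun _ => 0) (fun k => idx (k + 1))
          + DInd (m - 1) (Lshift m) (fun k => idx (k + 1)) := by
        rcases d1 with h | h <;> rcases d2 with h' | h' <;> rw [h, h'] <;> norm_num
      by_cases hP : idx 0 = 0 ∨ idx 0 = 1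
      · rw [if_pos hP, one_mul]; exact this
      · rw [if_neg hP, zero_mul])]
  have hq' : ∀ i < u + 2, (0:ℝ) < q (i + 1) := fun i hi => hqpos (i + 1) (by omega)
  have hq1' : (0:ℝ) < q (0 + 1) := hq' 0 (by omega)
  set E : ℝ := (((u + 2 : ℕ) : ℝ) - 2) / q (0 + 1) + ∑ k ∈ Finset.range (u + 2), 1 / q (k + 1)
    with hE
  have main : ∀ j : Fin N, mixedNorm (u + 2) N (fun i => q (i + 1))
      (fun idx =>
        (if (fun i => if i = 0 then (j : ℕ) else idx (i - 1)) 0 = 0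
            ∨ (fun i => if i = 0 then (j : ℕ) else idx (i - 1)) 0 = 1 then (1:ℝ) else 0) *
          ((DInd (m - 1) (fun _ => 0)
              fun k => (fun i => if i = 0 then (j : ℕ) else idx (i - 1)) (k + 1))
            + DInd (m - 1) (Lshift m)
              fun k => (fun i => if i = 0 then (j : ℕ) else idx (i - 1)) (k + 1)))
      = (if (j : ℕ) = 0 ∨ (j : ℕ) = 1 then (1:ℝ) else 0) * 2 ^ (1 / q (0 + 1) + E) := by
    intro j
    have ef : (fun idx : ℕ → ℕ =>
        (if (fun i => if i = 0 then (j : ℕ) else idx (i - 1)) 0 = 0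
            ∨ (fun i => if i = 0 then (j : ℕ) else idx (i - 1)) 0 = 1 then (1:ℝ) else 0) *
          ((DInd (m - 1) (fun _ => 0)
              fun k => (fun i => if i = 0 then (j : ℕ) else idx (i - 1)) (k + 1))
            + DInd (m - 1) (Lshift m)
              fun k => (fun i => if i = 0 then (j : ℕ) else idx (i - 1)) (k + 1)))
        = fun idx => (if (j : ℕ) = 0 ∨ (j : ℕ) = 1 then (1:ℝ) else 0) *
            (DInd (u + 2) (fun _ => 0) idx + DInd (u + 2) (Lshift m) idx) := by
      funext idx
      beta_reduce
      rw [if_pos rfl]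
      rw [DInd_congr (m - 1) (fun _ => 0) _ idx
          (fun k hk => by rw [if_neg (Nat.succ_ne_zero k), Nat.add_sub_cancel]),
        DInd_congr (m - 1) (Lshift m) _ idx
          (fun k hk => by rw [if_neg (Nat.succ_ne_zero k), Nat.add_sub_cancel])]
      rfl
    rw [ef]
    rw [mixedNorm_smul (u + 2) N _ _ _ (by split <;> norm_num) hq']
    rw [mixedNorm_split (u + 1) N _ _ _ (2 ^ (u + 1))
      (fun i hi => hq' i (by omega))
      (fun idx h => by
        have := DInd_supp (u + 2) (fun _ => 0) idx h
        have e1 : (u + 2) - 1 = u + 1 := rfl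
        rw [e1] at this
        beta_reduce at this
        omega)
      (fun idx h => by
        have := DInd_supp (u + 2) (Lshift m) idx h
        have e1 : (u + 2) - 1 = u + 1 := rfl
        have hls : Lshift m 0 = 2 ^ (u + 1) := by simp [Lshift]; omega
        rw [e1, hls] at this
        omega)]
    rw [normDInd (u + 2) (by omega) N (fun i => q (i + 1)) (fun _ => 0)
        (fun k hk => hq' k hk)
        (fun k hk => by
          rw [hN2]
          have e1 : (u + 2) - 1 = u + 1 := rfl
          rw [e1]
          beta_reduce
          simpa using Nat.pow_le_pow_right (n := 2) (by norm_num) (Nat.le_succ (u + 1))),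
      normDInd (u + 2) (by omega) N (fun i => q (i + 1)) (Lshift m)
        (fun k hk => hq' k hk)
        (fun k hk => by
          rw [hN2]
          have e1 : (u + 2) - 1 = u + 1 := rfl
          rw [e1]
          have hls : Lshift m k ≤ 2 ^ (u + 1) := by
            unfold Lshift
            split
            · have : m - 2 = u + 1 := by omega
              rw [this]
            · have hle : m - 1 - k ≤ u + 1 := by omega
              exact Nat.pow_le_pow_right (by norm_num) hle
          have e3 : (2:ℕ) ^ (u + 2) = 2 ^ (u + 1) + 2 ^ (u + 1) := by ring
          omega)]
    beta_reduce
    rw [← hE]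
    rw [← Real.rpow_mul (by norm_num : (0:ℝ) ≤ 2) E (q (0 + 1))]
    rw [show (2:ℝ) ^ (E * q (0 + 1)) + 2 ^ (E * q (0 + 1)) = 2 ^ ((1:ℝ) + E * q (0 + 1)) from by
      rw [Real.rpow_add (by norm_num : (0:ℝ) < 2), Real.rpow_one]; ring]
    rw [← Real.rpow_mul (by norm_num : (0:ℝ) ≤ 2)]
    congr 1
    field_simp
  rw [mixedNorm]
  rw [Finset.sum_congr rfl (fun j _ => congrArg (fun x : ℝ => x ^ q 0) (main j))]
  have sp : ∑ j : Fin N, (if (j : ℕ) = 0 ∨ (j : ℕ) = 1 then (1:ℝ) else 0) = 2 := by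
    have h4 : (4:ℕ) ≤ N := by
      rw [hN2]
      calc (4:ℕ) = 2 ^ 2 := rfl
      _ ≤ 2 ^ (u + 2) := Nat.pow_le_pow_right (by norm_num) (by omega)
    have h0 := sum_pair N 0 (by omega)
    simpa using h0
  simp only [ind_mul_rpow _ _ _ (ne_of_gt hq0)]
  rw [← Finset.sum_mul, sp]
  rw [← Real.rpow_mul (by norm_num : (0:ℝ) ≤ 2)]
  rw [show (2:ℝ) * 2 ^ ((1 / q (0 + 1) + E) * q 0) = 2 ^ ((1:ℝ) + (1 / q (0 + 1) + E) * q 0) from by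
    rw [Real.rpow_add (by norm_num : (0:ℝ) < 2), Real.rpow_one]]
  rw [← Real.rpow_mul (by norm_num : (0:ℝ) ≤ 2)]
  congr 1
  have hP : (0:ℝ) < ∏ i ∈ Finset.range m, q i :=
    Finset.prod_pos fun i hi => hqpos i (Finset.mem_range.mp hi)
  have hPe : ∀ i ∈ (Finset.range m).erase 1,
      (∏ i ∈ Finset.range m, q i) / q i = (∏ i ∈ Finset.range m, q i) * (1 / q i) := by
    intro i _
    rw [mul_one_div]
  rw [Finset.sum_congr rfl hPe, ← Finset.mul_sum,
    div_eq_mul_one_div (∏ i ∈ Finset.range m, q i) (q 1),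
    show (((m:ℝ) - 1) * ((∏ i ∈ Finset.range m, q i) * (1 / q 1))
        + (∏ i ∈ Finset.range m, q i) * ∑ i ∈ (Finset.range m).erase 1, 1 / q i)
      = (∏ i ∈ Finset.range m, q i) * (((m:ℝ) - 1) * (1 / q 1)
          + ∑ i ∈ (Finset.range m).erase 1, 1 / q i) from by ring,
    mul_div_cancel_left₀ _ (ne_of_gt hP)]
  have hsum1 : ∑ i ∈ (Finset.range m).erase 1, 1 / q i + 1 / q 1 = ∑ i ∈ Finset.range m, 1 / q i :=
    Finset.sum_erase_add _ _ (Finset.mem_range.mpr (by omega))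
  have hsum2 : ∑ i ∈ Finset.range m, 1 / q i
      = (∑ k ∈ Finset.range (u + 2), 1 / q (k + 1)) + 1 / q 0 := by
    rw [show m = (u + 2) + 1 from rfl, Finset.sum_range_succ']
  rw [hE]
  have e01 : q (0 + 1) = q 1 := by norm_num
  rw [e01]
  have hm1 : (m : ℝ) = (u : ℝ) + 3 := by push_cast [hm3]; ring
  rw [hm1]
  have expand : ∑ i ∈ (Finset.range m).erase 1, 1 / q i
      = (∑ k ∈ Finset.range (u + 2), 1 / q (k + 1)) + 1 / q 0 - 1 / q 1 := by
    rw [← hsum2, ← hsum1]; ring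
  rw [expand]
  push_cast
  field_simp
  ring
end
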